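/- A pebble move preserves well-ordering and never increases the energy, with the following exact energy change: suppose the configuration is well-ordered, r is a multiply occupied site with pebble index i, and the destination of label i exists. Then the configuration obtained by the pebble move (replacing τ_i by the destination time) is again well-ordered, and its energy E' satisfies: E' = E − 2 if the destination is a hole; E' = E − 1 if the destination is not in the cluster S; and E' = E if the destination is an occupied site (necessarily with pebble index greater than i). -/

import Mathlib

/-!
The move lowers the multiplicity of the old sticking point by one (it stays positive) and raises
that of the destination by one. By minimality of the destination every site passed on the way
already lies in the cluster, so the cluster grows at most by the destination: the energy drops by
one at the old site, while the destination contributes `m` instead of `|m - 1|` (or `0` if it is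
new). Well-ordering of the extended segment also comes from minimality: a site passed after `τ i`
carries no label above `i`, and every other path through the destination carries a label above
`i` by the definition of a destination.
-/

namespace IDLA

variable {n : ℕ} {α : Type*} [DecidableEq α] {ℓ : Fin n → ℕ}

/-- The cluster: the union of the live segments `r i t`, `t ≤ τ i`, of the `n` paths. -/
def cluster (r : ∀ i, Fin (ℓ i) → α) (τ : ∀ i, Fin (ℓ i)) : Finset α :=
  Finset.univ.biUnion fun i => (Finset.univ.filter fun t => t ≤ τ i).image (r i)

/-- `mult r τ z` is the number of labels at `z`, i.e. the number of paths whose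
sticking point `s i = r i (τ i)` equals `z`. -/
def mult (r : ∀ i, Fin (ℓ i) → α) (τ : ∀ i, Fin (ℓ i)) (z : α) : ℕ :=
  (Finset.univ.filter fun i => r i (τ i) = z).card

/-- The energy `E = ∑_{z ∈ S} |m(z) − 1|` of a configuration. -/
def energy (r : ∀ i, Fin (ℓ i) → α) (τ : ∀ i, Fin (ℓ i)) : ℕ :=
  ∑ z ∈ cluster r τ, ((mult r τ z : ℤ) - 1).natAbs

/-- A configuration is well-ordered if for all `i, j` and all `t < τ i`,
`r i t = s j` implies `j < i`. -/
def WellOrdered (r : ∀ i, Fin (ℓ i) → α) (τ : ∀ i, Fin (ℓ i)) : Prop :=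
  ∀ (i j : Fin n) (t : Fin (ℓ i)), t < τ i → r i t = r j (τ j) → j < i

/-- `z` is a possible destination for the label `i`: it is either (1) not in the
cluster `S`, or (2) an occupied site whose pebble index (the largest label sticking
there) exceeds `i`, or (3) a hole (a cluster site with no label) whose hole index (the
smallest label live there) exceeds `i`. -/
def IsDest (r : ∀ i, Fin (ℓ i) → α) (τ : ∀ i, Fin (ℓ i)) (i : Fin n) (z : α) : Prop :=
  z ∉ cluster r τ ∨
  (∃ j, i < j ∧ r j (τ j) = z) ∨
  (mult r τ z = 0 ∧ z ∈ cluster r τ ∧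
    ∀ j, (∃ t : Fin (ℓ j), t ≤ τ j ∧ r j t = z) → i < j)

end IDLA


theorem Finset.sum_add_add_eq_of_eqOn_sdiff_pair {ι β : Type*} [DecidableEq ι]
    [AddCommMonoid β] {T : Finset ι} {f g : ι → β} {a b : ι} (ha : a ∈ T) (hb : b ∈ T)
    (hab : a ≠ b) (hfg : ∀ w ∈ T, w ≠ a → w ≠ b → f w = g w) :
    ∑ w ∈ T, f w + (g a + g b) = ∑ w ∈ T, g w + (f a + f b) := by
  have hpair : {a, b} ⊆ T := Finset.insert_subset ha (Finset.singleton_subset_iff.mpr hb)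
  have hrest : ∑ w ∈ T \ {a, b}, f w = ∑ w ∈ T \ {a, b}, g w :=
    Finset.sum_congr rfl fun w hw => by
      simp only [Finset.mem_sdiff, Finset.mem_insert, Finset.mem_singleton, not_or] at hw
      exact hfg w hw.1 hw.2.1 hw.2.2
  rw [← Finset.sum_sdiff hpair, ← Finset.sum_sdiff (f := g) hpair, hrest,
    Finset.sum_pair hab, Finset.sum_pair hab]
  abel

namespace IDLA

variable {n : ℕ} {α : Type*} [DecidableEq α] {ℓ : Fin n → ℕ}
  {r : ∀ i, Fin (ℓ i) → α} {τ : ∀ i, Fin (ℓ i)} {i : Fin n} {t' : Fin (ℓ i)}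

theorem mem_cluster {w : α} :
    w ∈ cluster r τ ↔ ∃ j, ∃ t : Fin (ℓ j), t ≤ τ j ∧ r j t = w := by
  simp [cluster]

theorem mem_cluster_of_le {j : Fin n} {t : Fin (ℓ j)} (h : t ≤ τ j) : r j t ∈ cluster r τ :=
  mem_cluster.mpr ⟨j, t, h, rfl⟩

theorem mem_cluster_of_mult_pos {w : α} (h : 0 < mult r τ w) : w ∈ cluster r τ := by
  obtain ⟨j, hj⟩ := Finset.card_pos.mp h
  exact (Finset.mem_filter.mp hj).2 ▸ mem_cluster_of_le le_rfl

theorem cluster_mono {τ' : ∀ i, Fin (ℓ i)} (h : τ ≤ τ') :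
    cluster r τ ⊆ cluster r τ' := fun w hw => by
  obtain ⟨j, t, ht, rfl⟩ := mem_cluster.mp hw
  exact mem_cluster_of_le (ht.trans (h j))

theorem cluster_update_subset_insert
    (hpass : ∀ t, τ i < t → t < t' → r i t ∈ cluster r τ) :
    cluster r (Function.update τ i t') ⊆ insert (r i t') (cluster r τ) := fun w hw => by
  obtain ⟨j, t, ht, rfl⟩ := mem_cluster.mp hw
  rcases eq_or_ne j i with rfl | hj
  · rw [Function.update_self] at ht
    rcases ht.lt_or_eq with hlt | rfl
    · rcases le_or_gt t (τ j) with hle | hgt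
      · exact Finset.mem_insert_of_mem (mem_cluster_of_le hle)
      · exact Finset.mem_insert_of_mem (hpass t hgt hlt)
    · exact Finset.mem_insert_self _ _
  · rw [Function.update_of_ne hj] at ht
    exact Finset.mem_insert_of_mem (mem_cluster_of_le ht)

theorem mult_update_add (t' : Fin (ℓ i)) (w : α) :
    mult r (Function.update τ i t') w + (if r i (τ i) = w then 1 else 0)
      = mult r τ w + (if r i t' = w then 1 else 0) := by
  unfold mult
  rw [Finset.card_filter, Finset.card_filter,
    ← Finset.sum_erase_add _ _ (Finset.mem_univ i),
    ← Finset.sum_erase_add _ _ (Finset.mem_univ i)]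
  have hothers : ∀ j ∈ Finset.univ.erase i,
      (if r j (Function.update τ i t' j) = w then 1 else 0)
        = (if r j (τ j) = w then 1 else 0) := fun j hj => by
    rw [Function.update_of_ne (Finset.ne_of_mem_erase hj)]
  rw [Finset.sum_congr rfl hothers, Function.update_self]
  ring

theorem mult_update_of_ne {w : α} (hold : w ≠ r i (τ i)) (hnew : w ≠ r i t') :
    mult r (Function.update τ i t') w = mult r τ w := by
  simpa [Ne.symm hold, Ne.symm hnew] using mult_update_add (r := r) (τ := τ) t' w

theorem mult_update_old_add_one (hne : r i (τ i) ≠ r i t') :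
    mult r (Function.update τ i t') (r i (τ i)) + 1 = mult r τ (r i (τ i)) := by
  simpa [Ne.symm hne] using mult_update_add (r := r) (τ := τ) t' (r i (τ i))

theorem mult_update_new (hne : r i (τ i) ≠ r i t') :
    mult r (Function.update τ i t') (r i t') = mult r τ (r i t') + 1 := by
  simpa [hne] using mult_update_add (r := r) (τ := τ) t' (r i t')

/-- Extended by zero off the cluster, so that the energy is a sum over any superset of it. -/
def siteEnergy (r : ∀ i, Fin (ℓ i) → α) (τ : ∀ i, Fin (ℓ i)) (w : α) : ℕ :=
  if w ∈ cluster r τ then ((mult r τ w : ℤ) - 1).natAbs else 0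

theorem siteEnergy_of_mem {w : α} (h : w ∈ cluster r τ) :
    siteEnergy r τ w = ((mult r τ w : ℤ) - 1).natAbs :=
  if_pos h

theorem siteEnergy_of_notMem {w : α} (h : w ∉ cluster r τ) : siteEnergy r τ w = 0 :=
  if_neg h

theorem energy_eq_sum_siteEnergy {T : Finset α} (h : cluster r τ ⊆ T) :
    energy r τ = ∑ w ∈ T, siteEnergy r τ w := by
  simp only [energy, siteEnergy, Finset.sum_ite_mem, Finset.inter_eq_right.mpr h]

/-- The old site loses one unit of energy, the contribution of the new site goes from
`siteEnergy r τ (r i t')` to `mult r τ (r i t')`, and no other site changes. -/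
theorem energy_update_add_one_add_siteEnergy (hle : τ i ≤ t') (hne : r i (τ i) ≠ r i t')
    (hmult : 2 ≤ mult r τ (r i (τ i)))
    (hcl : cluster r (Function.update τ i t') ⊆ insert (r i t') (cluster r τ)) :
    energy r (Function.update τ i t') + 1 + siteEnergy r τ (r i t')
      = energy r τ + mult r τ (r i t') := by
  set τ' := Function.update τ i t'
  have hmono : cluster r τ ⊆ cluster r τ' :=
    cluster_mono (le_update_iff.mpr ⟨hle, fun _ _ => le_rfl⟩)
  have hold : r i (τ i) ∈ cluster r τ' := hmono (mem_cluster_of_le le_rfl)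
  have hnew : r i t' ∈ cluster r τ' := mem_cluster_of_le (by simp [τ'])
  have hsum := Finset.sum_add_add_eq_of_eqOn_sdiff_pair (f := siteEnergy r τ')
    (g := siteEnergy r τ) hold hnew hne fun w hw hwold hwnew => by
      have hwS : w ∈ cluster r τ := (Finset.mem_insert.mp (hcl hw)).resolve_left hwnew
      rw [siteEnergy_of_mem hw, siteEnergy_of_mem hwS, mult_update_of_ne hwold hwnew]
  rw [← energy_eq_sum_siteEnergy le_rfl, ← energy_eq_sum_siteEnergy hmono,
    siteEnergy_of_mem hold, siteEnergy_of_mem hnew, siteEnergy_of_mem (mem_cluster_of_le le_rfl),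
    mult_update_new hne] at hsum
  have hold_mult : mult r τ' (r i (τ i)) + 1 = mult r τ (r i (τ i)) :=
    mult_update_old_add_one hne
  omega

theorem mem_cluster_of_not_isDest {w : α} (h : ¬ IsDest r τ i w) : w ∈ cluster r τ := by
  by_contra hw
  exact h (Or.inl hw)

theorem le_of_not_isDest {j : Fin n} (h : ¬ IsDest r τ i (r j (τ j))) : j ≤ i := by
  by_contra hj
  exact h (Or.inr (Or.inl ⟨j, not_le.mp hj, rfl⟩))

theorem IsDest.exists_lt_of_mult_pos {w : α} (hdest : IsDest r τ i w)
    (hpos : 0 < mult r τ w) : ∃ j, i < j ∧ r j (τ j) = w := by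
  rcases hdest with hout | hocc | ⟨hzero, -⟩
  · exact absurd (mem_cluster_of_mult_pos hpos) hout
  · exact hocc
  · omega

theorem lt_of_eq_before_update (hwo : WellOrdered r τ)
    (hpebble : ∀ j, r j (τ j) = r i (τ i) → j ≤ i)
    (hfirst : ∀ t : Fin (ℓ i), τ i < t → t < t' → ¬ IsDest r τ i (r i t))
    {j : Fin n} (hji : j ≠ i) {t : Fin (ℓ i)} (ht : t < t') (heq : r i t = r j (τ j)) :
    j < i := by
  rcases lt_trichotomy t (τ i) with hlt | rfl | hgt
  · exact hwo i j t hlt heq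
  · exact (hpebble j heq.symm).lt_of_ne hji
  · exact (le_of_not_isDest (heq ▸ hfirst t hgt ht)).lt_of_ne hji

theorem lt_of_eq_isDest (hwo : WellOrdered r τ) (hdest : IsDest r τ i (r i t'))
    {j : Fin n} {t : Fin (ℓ j)} (ht : t < τ j) (heq : r j t = r i t') : i < j := by
  rcases hdest with hout | ⟨k, hik, hk⟩ | ⟨-, -, hhole⟩
  · exact absurd (heq ▸ mem_cluster_of_le ht.le) hout
  · exact hik.trans (hwo j k t ht (heq.trans hk.symm))
  · exact hhole j ⟨t, ht.le, heq⟩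

theorem wellOrdered_update (hinj : Function.Injective (r i)) (hwo : WellOrdered r τ)
    (hpebble : ∀ j, r j (τ j) = r i (τ i) → j ≤ i)
    (hdest : IsDest r τ i (r i t'))
    (hfirst : ∀ t : Fin (ℓ i), τ i < t → t < t' → ¬ IsDest r τ i (r i t)) :
    WellOrdered r (Function.update τ i t') := by
  intro a b t ht heq
  rcases eq_or_ne a i with rfl | ha
  · rw [Function.update_self] at ht
    rcases eq_or_ne b a with rfl | hb
    · rw [Function.update_self] at heq
      exact absurd (hinj heq) ht.ne
    · rw [Function.update_of_ne hb] at heq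
      exact lt_of_eq_before_update hwo hpebble hfirst hb ht heq
  · rw [Function.update_of_ne ha] at ht
    rcases eq_or_ne b i with rfl | hb
    · rw [Function.update_self] at heq
      exact lt_of_eq_isDest hwo hdest ht heq
    · rw [Function.update_of_ne hb] at heq
      exact hwo a b t ht heq

end IDLA

/-- A pebble move preserves well-ordering and never increases the
energy, with the exact energy change: suppose the configuration is well-ordered, the
site `r i (τ i)` is multiply occupied with pebble index `i` (i.e. `i` is the largest
label sticking there), and `t' > τ i` is the first time after `τ i` at which the path of
`i` is at a destination.  Then the configuration obtained by replacing `τ i` with `t'`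
is again well-ordered, and its energy `E'` satisfies: `E' = E − 2` if the destination is
a hole; `E' = E − 1` if the destination is not in the cluster `S`; and `E' = E` if the
destination is occupied (necessarily with pebble index greater than `i`). -/
theorem pebble_move_well_ordered_and_energy
    {n : ℕ} {α : Type*} [DecidableEq α] {ℓ : Fin n → ℕ}
    (r : ∀ i, Fin (ℓ i) → α) (hr : ∀ i, Function.Injective (r i))
    (τ : ∀ i, Fin (ℓ i)) (hwo : IDLA.WellOrdered r τ)
    (i : Fin n)
    (hmult : 2 ≤ IDLA.mult r τ (r i (τ i)))
    (hpebble : ∀ j, r j (τ j) = r i (τ i) → j ≤ i)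
    (t' : Fin (ℓ i)) (ht' : τ i < t')
    (hdest : IDLA.IsDest r τ i (r i t'))
    (hfirst : ∀ t : Fin (ℓ i), τ i < t → t < t' → ¬ IDLA.IsDest r τ i (r i t)) :
    IDLA.WellOrdered r (Function.update τ i t') ∧
    (IDLA.mult r τ (r i t') = 0 ∧ r i t' ∈ IDLA.cluster r τ →
      IDLA.energy r (Function.update τ i t') + 2 = IDLA.energy r τ) ∧
    (r i t' ∉ IDLA.cluster r τ →
      IDLA.energy r (Function.update τ i t') + 1 = IDLA.energy r τ) ∧
    (1 ≤ IDLA.mult r τ (r i t') →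
      IDLA.energy r (Function.update τ i t') = IDLA.energy r τ ∧
      ∃ j, i < j ∧ r j (τ j) = r i t') := by
  have hne : r i (τ i) ≠ r i t' := (hr i).ne ht'.ne
  have hcl := IDLA.cluster_update_subset_insert fun t h₁ h₂ =>
    IDLA.mem_cluster_of_not_isDest (hfirst t h₁ h₂)
  have henergy := IDLA.energy_update_add_one_add_siteEnergy ht'.le hne hmult hcl
  refine ⟨IDLA.wellOrdered_update (hr i) hwo hpebble hdest hfirst, ?hole, ?outside, ?occupied⟩
  case hole =>
    rintro ⟨hzero, hmem⟩
    rw [IDLA.siteEnergy_of_mem hmem, hzero] at henergy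
    omega
  case outside =>
    intro hout
    have hzero : IDLA.mult r τ (r i t') = 0 :=
      Nat.eq_zero_of_not_pos fun hpos => hout (IDLA.mem_cluster_of_mult_pos hpos)
    rw [IDLA.siteEnergy_of_notMem hout, hzero] at henergy
    omega
  case occupied =>
    intro hpos
    rw [IDLA.siteEnergy_of_mem (IDLA.mem_cluster_of_mult_pos hpos)] at henergy
    exact ⟨by omega, hdest.exists_lt_of_mult_pos hpos⟩
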